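/- The set of poles of the meromorphic continuation of s ↦ 2(4/9)^s + 2·27^{-s}/(1 − 2·3^{-s}) is {log_3 2 + 2πim/log 3 : m ∈ ℤ}, the same as the complex dimensions of the Cantor string. -/

import Mathlib

open Complex Filter Topology

/-!
Both `(4/9)^s` and `27^{-s}` are entire, so the function can fail to be analytic only where
`1 - 2·3^{-s}` vanishes, i.e. where `3^s = 2`, i.e. `s log 3 ∈ log 2 + 2πiℤ`. At such a point the
numerator `2·27^{-s}` is nonzero while the entire, non-identically-zero denominator has an isolated
zero, so the quotient is not even continuous there.
-/

theorem ofReal_cpow_eq_ofReal_iff {a b : ℝ} (ha : 0 < a) (ha₁ : a ≠ 1) (hb : 0 < b) (s : ℂ) :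
    (a : ℂ) ^ s = b ↔
      ∃ m : ℤ, s = Real.log b / Real.log a + 2 * Real.pi * I * m / Real.log a := by
  have hlog : (Real.log a : ℂ) ≠ 0 := by
    exact_mod_cast Real.log_ne_zero_of_pos_of_ne_one ha ha₁
  rw [cpow_def_of_ne_zero (by exact_mod_cast ha.ne'), ← ofReal_log ha.le,
    ← exp_log (by exact_mod_cast hb.ne' : (b : ℂ) ≠ 0), ← ofReal_log hb.le,
    exp_eq_exp_iff_exists_int]
  refine exists_congr fun m => ?_
  rw [← add_div, eq_div_iff hlog]
  constructor <;> intro h <;> linear_combination h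

theorem one_sub_two_mul_three_cpow_neg_eq_zero_iff (s : ℂ) :
    1 - 2 * (3 : ℂ) ^ (-s) = 0 ↔
      ∃ m : ℤ, s = Real.log 2 / Real.log 3 + 2 * Real.pi * I * m / Real.log 3 := by
  have h3 : (3 : ℂ) ^ s ≠ 0 := by simp
  rw [← ofReal_cpow_eq_ofReal_iff (by norm_num) (by norm_num) (by norm_num), cpow_neg,
    sub_eq_zero, eq_comm, ← div_eq_mul_inv, div_eq_one_iff_eq h3, eq_comm]
  push_cast
  rfl

theorem AnalyticOnNhd.eventually_ne_zero_nhdsNE {𝕜 E : Type*} [NontriviallyNormedField 𝕜]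
    [NormedAddCommGroup E] [NormedSpace 𝕜 E] [ConnectedSpace 𝕜] {f : 𝕜 → E}
    (hf : AnalyticOnNhd 𝕜 f Set.univ) {x : 𝕜} (hx : f x ≠ 0) (z : 𝕜) :
    ∀ᶠ w in 𝓝[≠] z, f w ≠ 0 := by
  have := mem_codiscrete.mp (hf.preimage_zero_mem_codiscrete hx) z
  rw [disjoint_principal_right, compl_compl] at this
  exact this

theorem not_continuousAt_div_of_eq_zero {𝕜 : Type*} [NontriviallyNormedField 𝕜] {f g : 𝕜 → 𝕜}
    {s : 𝕜} (hf : ContinuousAt f s) (hg : ContinuousAt g s) (hfs : f s ≠ 0) (hgs : g s = 0)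
    (hg_ne : ∀ᶠ z in 𝓝[≠] s, g z ≠ 0) : ¬ ContinuousAt (fun z => f z / g z) s := by
  intro hfg
  have h_to_zero : Tendsto (fun z => f z / g z * g z) (𝓝[≠] s) (𝓝 0) := by
    simpa [hgs] using (hfg.tendsto.mul hg.tendsto).mono_left nhdsWithin_le_nhds
  have h_eq : (fun z => f z / g z * g z) =ᶠ[𝓝[≠] s] f :=
    hg_ne.mono fun z hz => div_mul_cancel₀ (f z) hz
  exact hfs (tendsto_nhds_unique (hf.tendsto.mono_left nhdsWithin_le_nhds)
    (h_to_zero.congr' h_eq))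

/-- The pole set of the meromorphic continuation of
`s ↦ 2(4/9)^s + 2·27^{-s}/(1 − 2·3^{-s})` is exactly
`{log₃ 2 + 2πim/log 3 : m ∈ ℤ}`, the complex dimensions of the Cantor
string. -/
theorem topological_zeta_poles_cantor :
    {s : ℂ | ¬ AnalyticAt ℂ
        (fun z : ℂ => 2 * (4 / 9 : ℂ) ^ z
          + 2 * (27 : ℂ) ^ (-z) / (1 - 2 * (3 : ℂ) ^ (-z))) s}
      = {s : ℂ | ∃ m : ℤ, s = Real.log 2 / Real.log 3
          + 2 * Real.pi * Complex.I * m / Real.log 3} := by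
  have hP (s : ℂ) : AnalyticAt ℂ (fun z : ℂ => 2 * (4 / 9 : ℂ) ^ z) s := by
    fun_prop (disch := norm_num [slitPlane])
  have hN (s : ℂ) : AnalyticAt ℂ (fun z : ℂ => 2 * (27 : ℂ) ^ (-z)) s := by
    fun_prop (disch := norm_num [slitPlane])
  have hD (s : ℂ) : AnalyticAt ℂ (fun z : ℂ => 1 - 2 * (3 : ℂ) ^ (-z)) s := by
    fun_prop (disch := norm_num [slitPlane])
  ext s
  rw [Set.mem_ofPred_eq, Set.mem_ofPred_eq, ← one_sub_two_mul_three_cpow_neg_eq_zero_iff,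
    not_iff_comm]
  constructor
  · intro hDs
    exact (hP s).add ((hN s).div (hD s) hDs)
  · intro hA hDs
    refine not_continuousAt_div_of_eq_zero (hN s).continuousAt (hD s).continuousAt (by simp) hDs
      (AnalyticOnNhd.eventually_ne_zero_nhdsNE (fun z _ => hD z) (x := 0) (by norm_num) s) ?_
    convert (hA.sub (hP s)).continuousAt using 1
    funext z
    simp
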